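/- Let ν be strictly dominant, N ∈ ℤ, and m > 0 an integer. If g, g' ∈ U_N and g⁻¹·g' ∈ U_{m,N}, then (f_ν(g))⁻¹·f_ν(g') ∈ U_{m,N}. -/

import Mathlib

noncomputable section

open Matrix

/-- The ε-adic valuation on `L = k̄((ε))`, with `val 0 = ∞`. -/
def val {K : Type*} [Field K] (x : LaurentSeries K) : WithTop ℤ := x.orderTop

/-- The uniformizer ε of the Laurent series field. -/
def eps (K : Type*) [Field K] : LaurentSeries K := HahnSeries.single 1 1

/-- `σ : L → L` is the Frobenius automorphism: it fixes ε and raises each Laurent-series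
coefficient to the `q`-th power.  (This property determines `σ` uniquely.) -/
def IsFrobenius (K : Type*) [Field K] (q : ℕ)
    (σ : LaurentSeries K → LaurentSeries K) : Prop :=
  ∀ (x : LaurentSeries K) (n : ℤ), (σ x).coeff n = (x.coeff n) ^ q

/-- Upper unitriangular matrix: an element of `U_1`. -/
def Unitri {K : Type*} [Field K] {n : ℕ}
    (g : Matrix (Fin n) (Fin n) (LaurentSeries K)) : Prop :=
  (∀ i, g i i = 1) ∧ (∀ i j : Fin n, j < i → g i j = 0)

/-- `ν = (ν_1, …, ν_n)` is strictly dominant: `ν_1 > ν_2 > … > ν_n`. -/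
def StrictDominant {n : ℕ} (ν : Fin n → ℤ) : Prop :=
  ∀ p q : Fin n, p < q → ν q < ν p

/-- The diagonal matrix `ε^ν = diag(ε^{ν_1}, …, ε^{ν_n})`. -/
def epsDiag (K : Type*) [Field K] {n : ℕ} (ν : Fin n → ℤ) :
    Matrix (Fin n) (Fin n) (LaurentSeries K) :=
  Matrix.diagonal fun i => eps K ^ (ν i)

/-- The map `f_ν : U_1 → U_1`, `f_ν(h) = h⁻¹ · ε^ν · σ(h) · ε^{−ν}`. -/
def fnu {K : Type*} [Field K] {n : ℕ} (σ : LaurentSeries K → LaurentSeries K)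
    (ν : Fin n → ℤ) (g : Matrix (Fin n) (Fin n) (LaurentSeries K)) :
    Matrix (Fin n) (Fin n) (LaurentSeries K) :=
  g⁻¹ * epsDiag K ν * g.map σ * epsDiag K (fun i => -ν i)

/-- The subgroup `U(o_L)` of `U_1`: unitriangular matrices with entries in `o_L`. -/
def UO (K : Type*) [Field K] (n : ℕ) :
    Set (Matrix (Fin n) (Fin n) (LaurentSeries K)) :=
  {g | Unitri g ∧ ∀ p q : Fin n, 0 ≤ val (g p q)}

/-- `U_N = {g ∈ U_1 : val(g_{pq}) ≥ (q−p)·N for all p < q}`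
(equivalently `ε^{−μ}·U(o_L)·ε^{μ}` for `μ = (N, 2N, …, nN)`). -/
def UN (K : Type*) [Field K] (n : ℕ) (N : ℤ) :
    Set (Matrix (Fin n) (Fin n) (LaurentSeries K)) :=
  {g | Unitri g ∧ ∀ p q : Fin n, p < q →
    ((((q : ℤ) - (p : ℤ)) * N : ℤ) : WithTop ℤ) ≤ val (g p q)}

/-- `U_{m,N} = {g ∈ U_1 : val(g_{pq}) ≥ (q−p)·N + m for all p < q}`. -/
def UmN (K : Type*) [Field K] (n : ℕ) (m N : ℤ) :
    Set (Matrix (Fin n) (Fin n) (LaurentSeries K)) :=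
  {g | Unitri g ∧ ∀ p q : Fin n, p < q →
    ((((q : ℤ) - (p : ℤ)) * N + m : ℤ) : WithTop ℤ) ≤ val (g p q)}

/-! Write `g' = g u` with `u ∈ U_{m,N}`. Since `σ` is a ring endomorphism,
`f_ν(g u) = u⁻¹ · f_ν(g) · ε^ν σ(u) ε^{-ν}`, hence
`f_ν(g)⁻¹ f_ν(g') = (f_ν(g)⁻¹ u⁻¹ f_ν(g)) · ε^ν σ(u) ε^{-ν}`.
The bounds `(q - p) N + m` on the entries of `g - 1` add up along `p < r < q`, so matrix
multiplication adds the shifts `m`: hence `U_{m,N}` (`m ≥ 0`) is a group normalised by `U_N`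
(inverses are finite geometric series, `g - 1` being nilpotent). It is also stable under `σ`,
which does not lower valuations, and under conjugation by `ε^ν` for dominant `ν`, which only
raises valuations above the diagonal. In particular `f_ν(g) ∈ U_N`, and both factors lie in
`U_{m,N}`. -/

section Valuation

variable {K : Type*} [Field K]

lemma val_eq_addVal (x : LaurentSeries K) : val x = HahnSeries.addVal ℤ K x :=
  HahnSeries.addVal_apply.symm

lemma val_eq_top_iff {x : LaurentSeries K} : val x = ⊤ ↔ x = 0 :=
  HahnSeries.orderTop_eq_top

lemma le_val_add {c : WithTop ℤ} {x y : LaurentSeries K} (hx : c ≤ val x) (hy : c ≤ val y) :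
    c ≤ val (x + y) := by
  rw [val_eq_addVal] at *
  exact AddValuation.map_le_add _ hx hy

lemma le_val_sum {ι : Type*} {s : Finset ι} {f : ι → LaurentSeries K} {c : WithTop ℤ}
    (hf : ∀ i ∈ s, c ≤ val (f i)) : c ≤ val (∑ i ∈ s, f i) := by
  simp only [val_eq_addVal] at *
  exact AddValuation.map_le_sum _ hf

lemma val_mul (x y : LaurentSeries K) : val (x * y) = val x + val y := by
  simp only [val_eq_addVal, AddValuation.map_mul]

lemma val_eps_zpow (a : ℤ) : val (eps K ^ a) = a := by
  rw [eps, ← RatFunc.single_zpow]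
  exact HahnSeries.orderTop_single one_ne_zero

lemma val_le_val_map {L : Type*} [Field L] (φ : K →+* L) (x : LaurentSeries K) :
    val x ≤ val (x.map φ) := by
  cases h : val (x.map φ) with
  | top => exact le_top
  | coe a =>
    exact HahnSeries.orderTop_le_of_coeff_ne_zero fun hx =>
      HahnSeries.coeff_orderTop_ne h (by simp [hx])

end Valuation

def HahnSeries.mapRingHom {Γ R S : Type*} [AddCommMonoid Γ] [PartialOrder Γ]
    [IsOrderedCancelAddMonoid Γ] [Semiring R] [Semiring S] (φ : R →+* S) :
    HahnSeries Γ R →+* HahnSeries Γ S where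
  toFun x := x.map φ
  map_one' := HahnSeries.map_one φ.toMonoidWithZeroHom
  map_mul' _ _ := HahnSeries.map_mul (φ : R →ₙ+* S)
  map_zero' := HahnSeries.map_zero (φ : ZeroHom R S)
  map_add' _ _ := HahnSeries.map_add (φ : R →+ S)

lemma IsFrobenius.eq_mapRingHom {K : Type*} [Field K] {q : ℕ}
    {σ : LaurentSeries K → LaurentSeries K} (hσ : IsFrobenius K q σ) {φ : K →+* K}
    (hφ : ∀ a, φ a = a ^ q) : σ = HahnSeries.mapRingHom φ := by
  ext x a
  rw [hσ, ← hφ]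
  rfl

section ValBounded

variable (K : Type*) [Field K] {ι : Type*}

/-- A weight `⊤` forces a zero entry, so triangularity is part of the bound. -/
def valBounded (W : ι → ι → WithTop ℤ) : AddSubgroup (Matrix ι ι (LaurentSeries K)) where
  carrier := {x | ∀ p q, W p q ≤ val (x p q)}
  zero_mem' _ _ := by simp [val]
  add_mem' hx hy p q := le_val_add (hx p q) (hy p q)
  neg_mem' hx p q := by simpa [val] using hx p q

variable {K}

lemma valBounded_antitone : Antitone (valBounded K (ι := ι)) :=
  fun _ _ hW _ hx p q => (hW p q).trans (hx p q)

lemma mul_mem_valBounded [Fintype ι] {A B C : ι → ι → WithTop ℤ}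
    (hABC : ∀ p r q, C p q ≤ A p r + B r q) {x y : Matrix ι ι (LaurentSeries K)}
    (hx : x ∈ valBounded K A) (hy : y ∈ valBounded K B) : x * y ∈ valBounded K C := by
  intro p q
  refine le_val_sum fun r _ => ?_
  rw [val_mul]
  exact (hABC p r q).trans (add_le_add (hx p r) (hy r q))

lemma diagonal_mul_mul_diagonal_mem_valBounded [Fintype ι] [DecidableEq ι]
    {W W' : ι → ι → WithTop ℤ} {d e : ι → LaurentSeries K}
    (hW : ∀ p q, W' p q ≤ val (d p) + W p q + val (e q)) {x : Matrix ι ι (LaurentSeries K)}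
    (hx : x ∈ valBounded K W) : diagonal d * x * diagonal e ∈ valBounded K W' := by
  intro p q
  rw [mul_diagonal, diagonal_mul, val_mul, val_mul]
  exact (hW p q).trans (by gcongr; exact hx p q)

lemma map_mem_valBounded {W : ι → ι → WithTop ℤ} {σ : LaurentSeries K → LaurentSeries K}
    (hσ : ∀ x, val x ≤ val (σ x)) {x : Matrix ι ι (LaurentSeries K)}
    (hx : x ∈ valBounded K W) : x.map σ ∈ valBounded K W :=
  fun p q => (hx p q).trans (hσ _)

end ValBounded

section StepWeight

variable {K : Type*} [Field K] {n : ℕ}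

/-- The bounds on `g - 1` that define `g ∈ U_{m,N}` (see `mem_UmN_iff`). -/
def stepWeight (N m : ℤ) (p q : Fin n) : WithTop ℤ :=
  if p < q then (((q : ℤ) - p) * N + m : ℤ) else ⊤

lemma stepWeight_add_le (N a b : ℤ) (p r q : Fin n) :
    stepWeight N (a + b) p q ≤ stepWeight N a p r + stepWeight N b r q := by
  by_cases hpr : p < r
  · by_cases hrq : r < q
    · simp only [stepWeight, if_pos (hpr.trans hrq), if_pos hpr, if_pos hrq]
      rw [← WithTop.coe_add, WithTop.coe_le_coe]
      exact le_of_eq (by ring)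
    · simp [stepWeight, hrq]
  · simp [stepWeight, hpr]

lemma stepWeight_mono (N : ℤ) {a b : ℤ} (hab : a ≤ b) :
    stepWeight (n := n) N a ≤ stepWeight N b := by
  intro p q
  unfold stepWeight
  split_ifs
  · exact WithTop.coe_le_coe.2 (by linarith)
  · exact le_rfl

lemma stepWeight_le_conj {ν : Fin n → ℤ} (hν : Antitone ν) (N m : ℤ) (p q : Fin n) :
    stepWeight N m p q ≤
      (ν p : WithTop ℤ) + stepWeight N m p q + ((-ν q : ℤ) : WithTop ℤ) := by
  unfold stepWeight
  split_ifs with hpq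
  · norm_cast
    linarith [hν hpq.le]
  · simp

lemma eq_zero_of_mem_valBounded_stepWeight {N m : ℤ}
    {x : Matrix (Fin n) (Fin n) (LaurentSeries K)} (hx : x ∈ valBounded K (stepWeight N m))
    {p q : Fin n} (hpq : ¬ p < q) : x p q = 0 :=
  val_eq_top_iff.1 (top_le_iff.1 (by simpa [stepWeight, hpq] using hx p q))

lemma mul_mem_valBounded_stepWeight {N a b : ℤ}
    {x y : Matrix (Fin n) (Fin n) (LaurentSeries K)}
    (hx : x ∈ valBounded K (stepWeight N a)) (hy : y ∈ valBounded K (stepWeight N b)) :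
    x * y ∈ valBounded K (stepWeight N (a + b)) :=
  mul_mem_valBounded (stepWeight_add_le N a b) hx hy

lemma pow_succ_mem_valBounded_stepWeight {N m : ℤ} (hm : 0 ≤ m)
    {x : Matrix (Fin n) (Fin n) (LaurentSeries K)} (hx : x ∈ valBounded K (stepWeight N m))
    (k : ℕ) : x ^ (k + 1) ∈ valBounded K (stepWeight N m) := by
  induction k with
  | zero => simpa using hx
  | succ k ih =>
    rw [pow_succ]
    exact valBounded_antitone (stepWeight_mono N (by linarith))
      (mul_mem_valBounded_stepWeight ih hx)

lemma pow_eq_zero_of_mem_valBounded_stepWeight {N m : ℤ}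
    {x : Matrix (Fin n) (Fin n) (LaurentSeries K)} (hx : x ∈ valBounded K (stepWeight N m)) :
    x ^ n = 0 := by
  have hup : x.IsUpperTriangular := fun i j hji =>
    eq_zero_of_mem_valBounded_stepWeight hx (not_lt.2 hji.le)
  have hdiag : ∀ i, x i i = 0 := fun i => eq_zero_of_mem_valBounded_stepWeight hx (lt_irrefl i)
  simpa [charpoly_of_isUpperTriangular x hup, hdiag] using x.aeval_self_charpoly

end StepWeight

lemma Unitri.isUnit_det {K : Type*} [Field K] {n : ℕ}
    {g : Matrix (Fin n) (Fin n) (LaurentSeries K)} (hg : Unitri g) : IsUnit g.det := by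
  rw [det_of_isUpperTriangular fun i j hji => hg.2 i j hji]
  simp [hg.1]

lemma epsDiag_mul_epsDiag_neg (K : Type*) [Field K] {n : ℕ} (ν : Fin n → ℤ) :
    epsDiag K ν * epsDiag K (fun i => -ν i) = 1 := by
  rw [epsDiag, epsDiag, diagonal_mul_diagonal, ← diagonal_one]
  congr 1
  funext i
  rw [← zpow_add₀ (HahnSeries.single_ne_zero one_ne_zero), add_neg_cancel, zpow_zero]

lemma epsDiag_neg_mul_epsDiag (K : Type*) [Field K] {n : ℕ} (ν : Fin n → ℤ) :
    epsDiag K (fun i => -ν i) * epsDiag K ν = 1 := by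
  simpa using epsDiag_mul_epsDiag_neg K (fun i => -ν i)

section UmN

variable {K : Type*} [Field K] {n : ℕ} {m N : ℤ}

lemma mem_UmN_iff {g : Matrix (Fin n) (Fin n) (LaurentSeries K)} :
    g ∈ UmN K n m N ↔ g - 1 ∈ valBounded K (stepWeight N m) := by
  constructor
  · rintro ⟨⟨hdiag, hlower⟩, hupper⟩ p q
    by_cases hpq : p < q
    · simpa [stepWeight, hpq, one_apply_ne hpq.ne] using hupper p q hpq
    · rw [show stepWeight N m p q = ⊤ from if_neg hpq, top_le_iff, val_eq_top_iff,
        Matrix.sub_apply, sub_eq_zero]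
      rcases (not_lt.1 hpq).lt_or_eq with hqp | rfl
      · rw [hlower p q hqp, one_apply_ne hqp.ne']
      · rw [hdiag, one_apply_eq]
  · intro hg
    have hzero := fun {p q : Fin n} (hpq : ¬ p < q) =>
      sub_eq_zero.1 (eq_zero_of_mem_valBounded_stepWeight hg hpq)
    refine ⟨⟨fun i => ?_, fun i j hji => ?_⟩, fun p q hpq => ?_⟩
    · simpa using hzero (lt_irrefl i)
    · simpa [one_apply_ne hji.ne'] using hzero (not_lt.2 hji.le)
    · simpa [stepWeight, hpq, one_apply_ne hpq.ne] using hg p q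

lemma UN_eq_UmN_zero : UN K n N = UmN K n 0 N := by
  simp [UN, UmN]

lemma UmN_mul_mem (hm : 0 ≤ m) {g h : Matrix (Fin n) (Fin n) (LaurentSeries K)}
    (hg : g ∈ UmN K n m N) (hh : h ∈ UmN K n m N) : g * h ∈ UmN K n m N := by
  rw [mem_UmN_iff] at *
  have hprod := valBounded_antitone (stepWeight_mono N (by linarith : m ≤ m + m))
    (mul_mem_valBounded_stepWeight hg hh)
  have : g * h - 1 = (g - 1) + (h - 1) + (g - 1) * (h - 1) := by noncomm_ring
  rw [this]
  exact add_mem (add_mem hg hh) hprod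

lemma UmN_inv_mem (hm : 0 ≤ m) {g : Matrix (Fin n) (Fin n) (LaurentSeries K)}
    (hg : g ∈ UmN K n m N) : g⁻¹ ∈ UmN K n m N := by
  set x := 1 - g
  have hx : x ∈ valBounded K (stepWeight N m) := by
    simpa [x] using neg_mem (mem_UmN_iff.1 hg)
  have hinv : g⁻¹ = ∑ k ∈ Finset.range (n + 1), x ^ k := by
    refine inv_eq_right_inv ?_
    have := mul_neg_geom_sum x (n + 1)
    rwa [pow_succ, pow_eq_zero_of_mem_valBounded_stepWeight hx, zero_mul, sub_zero,
      sub_sub_cancel] at this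
  rw [mem_UmN_iff, hinv, Finset.sum_range_succ', pow_zero, add_sub_cancel_right]
  exact sum_mem fun k _ => pow_succ_mem_valBounded_stepWeight hm hx k

lemma UN_mul_mem_valBounded {g x : Matrix (Fin n) (Fin n) (LaurentSeries K)}
    (hg : g ∈ UN K n N) (hx : x ∈ valBounded K (stepWeight N m)) :
    g * x ∈ valBounded K (stepWeight N m) := by
  rw [UN_eq_UmN_zero, mem_UmN_iff] at hg
  have hgx := mul_mem_valBounded_stepWeight hg hx
  rw [zero_add, sub_mul, one_mul] at hgx
  simpa using add_mem hgx hx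

lemma mul_UN_mem_valBounded {g x : Matrix (Fin n) (Fin n) (LaurentSeries K)}
    (hg : g ∈ UN K n N) (hx : x ∈ valBounded K (stepWeight N m)) :
    x * g ∈ valBounded K (stepWeight N m) := by
  rw [UN_eq_UmN_zero, mem_UmN_iff] at hg
  have hxg := mul_mem_valBounded_stepWeight hx hg
  rw [add_zero, mul_sub, mul_one] at hxg
  simpa using add_mem hxg hx

lemma UmN_conj_mem {g u : Matrix (Fin n) (Fin n) (LaurentSeries K)} (hg : g ∈ UN K n N)
    (hu : u ∈ UmN K n m N) : g⁻¹ * u * g ∈ UmN K n m N := by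
  have hginv : g⁻¹ ∈ UN K n N := by
    rw [UN_eq_UmN_zero] at hg ⊢
    exact UmN_inv_mem le_rfl hg
  have : g⁻¹ * u * g - 1 = g⁻¹ * (u - 1) * g := by
    rw [mul_sub, sub_mul, mul_one, nonsing_inv_mul g hg.1.isUnit_det]
  rw [mem_UmN_iff, this]
  exact mul_UN_mem_valBounded hg (UN_mul_mem_valBounded hginv (mem_UmN_iff.1 hu))

lemma UmN_conj_epsDiag_mem {ν : Fin n → ℤ} (hν : Antitone ν)
    {u : Matrix (Fin n) (Fin n) (LaurentSeries K)} (hu : u ∈ UmN K n m N) :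
    epsDiag K ν * u * epsDiag K (fun i => -ν i) ∈ UmN K n m N := by
  have : epsDiag K ν * u * epsDiag K (fun i => -ν i) - 1
      = epsDiag K ν * (u - 1) * epsDiag K (fun i => -ν i) := by
    rw [mul_sub, sub_mul, mul_one, epsDiag_mul_epsDiag_neg]
  rw [mem_UmN_iff, this]
  refine diagonal_mul_mul_diagonal_mem_valBounded (fun p q => ?_) (mem_UmN_iff.1 hu)
  simpa only [val_eps_zpow] using stepWeight_le_conj hν N m p q

lemma UmN_map_mem {σ : LaurentSeries K →+* LaurentSeries K} (hσ : ∀ x, val x ≤ val (σ x))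
    {u : Matrix (Fin n) (Fin n) (LaurentSeries K)} (hu : u ∈ UmN K n m N) :
    u.map σ ∈ UmN K n m N := by
  rw [mem_UmN_iff] at *
  rw [← Matrix.map_one σ (map_zero σ) (map_one σ), ← Matrix.map_sub _ (map_sub σ)]
  exact map_mem_valBounded hσ hu

end UmN

section Fnu

variable {K : Type*} [Field K] {n : ℕ} {σ : LaurentSeries K →+* LaurentSeries K}
  {ν : Fin n → ℤ} {m N : ℤ}

lemma fnu_mul (g u : Matrix (Fin n) (Fin n) (LaurentSeries K)) :
    fnu σ ν (g * u) =
      u⁻¹ * fnu σ ν g * (epsDiag K ν * u.map σ * epsDiag K (fun i => -ν i)) := by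
  simp only [fnu, Matrix.mul_inv_rev, Matrix.map_mul, mul_assoc]
  rw [← mul_assoc (epsDiag K fun i => -ν i) (epsDiag K ν), epsDiag_neg_mul_epsDiag, one_mul]

lemma fnu_mem_UN (hσ : ∀ x, val x ≤ val (σ x)) (hν : Antitone ν)
    {g : Matrix (Fin n) (Fin n) (LaurentSeries K)} (hg : g ∈ UN K n N) :
    fnu σ ν g ∈ UN K n N := by
  rw [UN_eq_UmN_zero] at *
  rw [show fnu σ ν g = g⁻¹ * (epsDiag K ν * g.map σ * epsDiag K fun i => -ν i) by
    simp only [fnu, mul_assoc]]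
  exact UmN_mul_mem le_rfl (UmN_inv_mem le_rfl hg)
    (UmN_conj_epsDiag_mem hν (UmN_map_mem hσ hg))

theorem fnu_inv_mul_fnu_mem_UmN (hσ : ∀ x, val x ≤ val (σ x)) (hν : Antitone ν)
    (hm : 0 ≤ m) {g g' : Matrix (Fin n) (Fin n) (LaurentSeries K)} (hg : g ∈ UN K n N)
    (h : g⁻¹ * g' ∈ UmN K n m N) : (fnu σ ν g)⁻¹ * fnu σ ν g' ∈ UmN K n m N := by
  obtain ⟨u, rfl⟩ : ∃ u, g' = g * u :=
    ⟨g⁻¹ * g', by rw [← mul_assoc, mul_nonsing_inv g hg.1.isUnit_det, one_mul]⟩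
  rw [← mul_assoc, nonsing_inv_mul g hg.1.isUnit_det, one_mul] at h
  rw [fnu_mul, ← mul_assoc, ← mul_assoc (fnu σ ν g)⁻¹ u⁻¹]
  exact UmN_mul_mem hm (UmN_conj_mem (fnu_mem_UN hσ hν hg) (UmN_inv_mem hm h))
    (UmN_conj_epsDiag_mem hν (UmN_map_mem hσ h))

end Fnu

theorem fnu_well_defined_mod_UmN_general (F : Type*) [Field F] [Fintype F]
    (n : ℕ)
    (σ : LaurentSeries (AlgebraicClosure F) → LaurentSeries (AlgebraicClosure F))
    (hσ : IsFrobenius (AlgebraicClosure F) (Fintype.card F) σ)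
    (ν : Fin n → ℤ) (hν : StrictDominant ν) (N m : ℤ) (hm : 0 < m)
    (g g' : Matrix (Fin n) (Fin n) (LaurentSeries (AlgebraicClosure F)))
    (hg : g ∈ UN (AlgebraicClosure F) n N)
    (h : g⁻¹ * g' ∈ UmN (AlgebraicClosure F) n m N) :
    (fnu σ ν g)⁻¹ * fnu σ ν g' ∈ UmN (AlgebraicClosure F) n m N := by
  obtain rfl := hσ.eq_mapRingHom (φ := FiniteField.frobeniusAlgHom F (AlgebraicClosure F))
    fun _ => rfl
  have hνanti : Antitone ν := StrictAnti.antitone fun p q => hν p q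
  exact fnu_inv_mul_fnu_mem_UmN (val_le_val_map _) hνanti hm.le hg h

/-- if `ν` is strictly dominant, `g, g' ∈ U_N` and `g⁻¹·g' ∈ U_{m,N}`, then
`(f_ν(g))⁻¹·f_ν(g') ∈ U_{m,N}`. -/
theorem fnu_well_defined_mod_UmN (F : Type*) [Field F] [Fintype F]
    (n : ℕ) (hn : 2 ≤ n)
    (σ : LaurentSeries (AlgebraicClosure F) → LaurentSeries (AlgebraicClosure F))
    (hσ : IsFrobenius (AlgebraicClosure F) (Fintype.card F) σ)
    (ν : Fin n → ℤ) (hν : StrictDominant ν) (N m : ℤ) (hm : 0 < m)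
    (g g' : Matrix (Fin n) (Fin n) (LaurentSeries (AlgebraicClosure F)))
    (hg : g ∈ UN (AlgebraicClosure F) n N) (hg' : g' ∈ UN (AlgebraicClosure F) n N)
    (h : g⁻¹ * g' ∈ UmN (AlgebraicClosure F) n m N) :
    (fnu σ ν g)⁻¹ * fnu σ ν g' ∈ UmN (AlgebraicClosure F) n m N :=
  fnu_well_defined_mod_UmN_general F n σ hσ ν hν N m hm g g' hg h
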